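/- arXiv:1011.2230 — 2 statements merged into one kernel-verified Lean document; each statement's English description precedes it below -/
import Mathlib

section
/- If F : Ω → Ω is a diffeomorphism of a domain Ω ⊂ ℝ^d restricting to the identity on ∂Ω, and u solves ∇·(σ∇u) = 0 in Ω, then v = u ∘ F⁻¹ solves ∇·((F_*σ)∇v) = 0 in Ω, where (F_*σ)^{jk}(x) = (det DF)⁻¹ Σ_{p,q} (∂F^j/∂y^p)(∂F^k/∂y^q) σ^{pq} evaluated at y = F⁻¹(x). -/
open Matrix Finset Topology

theorem det_expand_aux {d : ℕ} (A : Matrix (Fin d) (Fin d) ℝ) (g : Fin d → Fin d → ℝ) :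
    ∑ τ : Equiv.Perm (Fin d), ((Equiv.Perm.sign τ : ℤ) : ℝ) *
        ∑ i, (∏ i' ∈ Finset.univ.erase i, A (τ i') i') * g (τ i) i
      = ∑ b, ∑ a, A.adjugate b a * g a b := by
  have key : ∀ (i a : Fin d),
      A.adjugate i a = ∑ τ : Equiv.Perm (Fin d), ((Equiv.Perm.sign τ : ℤ) : ℝ) *
        ((Pi.single a 1 : Fin d → ℝ) (τ i) * ∏ i' ∈ Finset.univ.erase i, A (τ i') i') := by
    intro i a
    have h1 : A.adjugate i a = (A.updateCol i (Pi.single a 1)).det := by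
      have := Matrix.adjugate_transpose A
      rw [show A.adjugate i a = (A.adjugate)ᵀ a i from rfl, this]
      rw [Matrix.adjugate_def]
      simp only [Matrix.of_apply]
      rw [Matrix.cramer_apply]
      simp [Matrix.transpose_transpose]
    rw [h1, Matrix.det_apply']
    refine Finset.sum_congr rfl fun τ _ => ?_
    congr 1
    rw [← Finset.mul_prod_erase Finset.univ _ (Finset.mem_univ i)]
    rw [Matrix.updateCol_self]
    congr 1
    refine Finset.prod_congr rfl fun i' hi' => ?_
    rw [Matrix.updateCol_ne (Finset.ne_of_mem_erase hi')]
  simp only [Finset.mul_sum]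
  rw [Finset.sum_comm]
  refine Finset.sum_congr rfl fun i _ => ?_
  have expand : ∀ τ : Equiv.Perm (Fin d),
      ((Equiv.Perm.sign τ : ℤ) : ℝ) *
          ((∏ i' ∈ Finset.univ.erase i, A (τ i') i') * g (τ i) i)
      = ∑ a, ((Equiv.Perm.sign τ : ℤ) : ℝ) *
          ((Pi.single a 1 : Fin d → ℝ) (τ i) * ∏ i' ∈ Finset.univ.erase i, A (τ i') i')
            * g a i := by
    intro τ
    simp only [Pi.single_apply, ite_mul, one_mul, zero_mul, mul_ite, mul_zero, mul_one,
      Finset.sum_ite_eq, Finset.mem_univ, if_true]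
    ring
  calc ∑ τ : Equiv.Perm (Fin d), ((Equiv.Perm.sign τ : ℤ) : ℝ) *
          ((∏ i' ∈ Finset.univ.erase i, A (τ i') i') * g (τ i) i)
      = ∑ τ : Equiv.Perm (Fin d), ∑ a, ((Equiv.Perm.sign τ : ℤ) : ℝ) *
          ((Pi.single a 1 : Fin d → ℝ) (τ i) * ∏ i' ∈ Finset.univ.erase i, A (τ i') i')
            * g a i := Finset.sum_congr rfl fun τ _ => expand τ
    _ = ∑ a, ∑ τ : Equiv.Perm (Fin d), ((Equiv.Perm.sign τ : ℤ) : ℝ) *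
          ((Pi.single a 1 : Fin d → ℝ) (τ i) * ∏ i' ∈ Finset.univ.erase i, A (τ i') i')
            * g a i := Finset.sum_comm
    _ = ∑ a, A.adjugate i a * g a i := by
        refine Finset.sum_congr rfl fun a _ => ?_
        rw [key i a, Finset.sum_mul]

theorem jacobi_aux {E : Type*} [NormedAddCommGroup E] [NormedSpace ℝ E]
    {d : ℕ} {M : E → Matrix (Fin d) (Fin d) ℝ} {M' : Fin d → Fin d → (E →L[ℝ] ℝ)} {x : E}
    (h : ∀ a b, HasFDerivAt (fun y => M y a b) (M' a b) x) :
    HasFDerivAt (fun y => (M y).det) (∑ b, ∑ a, (M x).adjugate b a • M' a b) x := by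
  have h2 : HasFDerivAt
      (fun y => ∑ τ : Equiv.Perm (Fin d), ((Equiv.Perm.sign τ : ℤ) : ℝ) * ∏ i, M y (τ i) i)
      (∑ τ : Equiv.Perm (Fin d), ((Equiv.Perm.sign τ : ℤ) : ℝ) •
        (∑ i, (∏ i' ∈ Finset.univ.erase i, M x (τ i') i') • M' (τ i) i)) x := by
    apply HasFDerivAt.fun_sum
    intro τ _
    exact (HasFDerivAt.finset_prod (fun i _ => h (τ i) i)).const_mul _
  have hfun : (fun y => (M y).det) = (fun y =>
      ∑ τ : Equiv.Perm (Fin d), ((Equiv.Perm.sign τ : ℤ) : ℝ) * ∏ i, M y (τ i) i) := by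
    funext y
    exact Matrix.det_apply' _
  rw [hfun]
  convert h2 using 1
  ext v
  simp only [ContinuousLinearMap.sum_apply, ContinuousLinearMap.smul_apply, smul_eq_mul]
  rw [← det_expand_aux (M x) (fun a b => M' a b v)]

theorem alg_aux {d : ℕ} (A K : Matrix (Fin d) (Fin d) ℝ) (hKA : K * A = 1)
    (hdet : A.det ≠ 0)
    (J' : Fin d → Fin d → Fin d → ℝ)
    (hJ'sym : ∀ m a p, J' m a p = J' p a m)
    (b : Fin d → ℝ) (b' : Fin d → Fin d → ℝ)
    (hdiv : ∑ m, b' m m = 0) :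
    ∑ j, ∑ m, K m j *
      ( -((A.det)^2)⁻¹ * (∑ i, ∑ a, A.adjugate i a * J' m a i) * (∑ p, A j p * b p)
        + (A.det)⁻¹ * ((∑ p, J' m j p * b p) + (∑ p, A j p * b' m p)) ) = 0 := by
  have hadj : A.adjugate = A.det • K := by
    have h1 : K * (A * A.adjugate) = K * (A.det • 1) := by rw [Matrix.mul_adjugate]
    rwa [← Matrix.mul_assoc, hKA, Matrix.one_mul, Matrix.mul_smul, Matrix.mul_one] at h1
  have hone : ∀ m p, ∑ j, K m j * A j p = if m = p then 1 else 0 := by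
    intro m p
    rw [← Matrix.mul_apply, hKA, Matrix.one_apply]
  -- reduce to the det-free statement
  have key : ∑ j, ∑ m, K m j *
      ( -(∑ i, ∑ a, K i a * J' m a i) * (∑ p, A j p * b p)
        + ((∑ p, J' m j p * b p) + (∑ p, A j p * b' m p)) ) = 0 := by
    have hcol : ∀ (m : Fin d) (c : Fin d → ℝ),
        ∑ j, K m j * ∑ p, A j p * c p = c m := by
      intro m c
      calc ∑ j, K m j * ∑ p, A j p * c p
          = ∑ j, ∑ p, K m j * A j p * c p := by
            refine Finset.sum_congr rfl fun j _ => ?_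
            rw [Finset.mul_sum]
            refine Finset.sum_congr rfl fun p _ => ?_
            ring
        _ = ∑ p, (∑ j, K m j * A j p) * c p := by
            rw [Finset.sum_comm]
            exact Finset.sum_congr rfl fun p _ => (Finset.sum_mul _ _ _).symm
        _ = c m := by
            simp only [hone, ite_mul, one_mul, zero_mul]
            simp
    have split : ∑ j, ∑ m, K m j *
        ( -(∑ i, ∑ a, K i a * J' m a i) * (∑ p, A j p * b p)
          + ((∑ p, J' m j p * b p) + (∑ p, A j p * b' m p)) )
        = -(∑ j, ∑ m, K m j * (∑ i, ∑ a, K i a * J' m a i) * (∑ p, A j p * b p))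
          + (∑ j, ∑ m, K m j * (∑ p, J' m j p * b p))
          + (∑ j, ∑ m, K m j * (∑ p, A j p * b' m p)) := by
      rw [← Finset.sum_neg_distrib, ← Finset.sum_add_distrib, ← Finset.sum_add_distrib]
      refine Finset.sum_congr rfl fun j _ => ?_
      rw [← Finset.sum_neg_distrib, ← Finset.sum_add_distrib, ← Finset.sum_add_distrib]
      refine Finset.sum_congr rfl fun m _ => ?_
      ring
    rw [split]
    have hT3 : ∑ j, ∑ m, K m j * (∑ p, A j p * b' m p) = 0 := by
      rw [Finset.sum_comm]
      calc ∑ m, ∑ j, K m j * (∑ p, A j p * b' m p)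
          = ∑ m, b' m m := Finset.sum_congr rfl fun m _ => hcol m (b' m)
        _ = 0 := hdiv
    have hT1 : ∑ j, ∑ m, K m j * (∑ i, ∑ a, K i a * J' m a i) * (∑ p, A j p * b p)
        = ∑ m, (∑ i, ∑ a, K i a * J' m a i) * b m := by
      rw [Finset.sum_comm]
      refine Finset.sum_congr rfl fun m _ => ?_
      calc ∑ j, K m j * (∑ i, ∑ a, K i a * J' m a i) * (∑ p, A j p * b p)
          = (∑ i, ∑ a, K i a * J' m a i) * ∑ j, K m j * (∑ p, A j p * b p) := by
            rw [Finset.mul_sum]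
            refine Finset.sum_congr rfl fun j _ => ?_
            ring
        _ = (∑ i, ∑ a, K i a * J' m a i) * b m := by rw [hcol m b]
    have hT2 : ∑ j, ∑ m, K m j * (∑ p, J' m j p * b p)
        = ∑ m, (∑ i, ∑ a, K i a * J' m a i) * b m := by
      calc ∑ j, ∑ m, K m j * (∑ p, J' m j p * b p)
          = ∑ j, ∑ m, ∑ p, K m j * J' p j m * b p := by
            refine Finset.sum_congr rfl fun j _ => Finset.sum_congr rfl fun m _ => ?_
            rw [Finset.mul_sum]
            refine Finset.sum_congr rfl fun p _ => ?_
            rw [hJ'sym m j p]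
            ring
        _ = ∑ m, ∑ j, ∑ p, K m j * J' p j m * b p := Finset.sum_comm
        _ = ∑ m, ∑ p, ∑ j, K m j * J' p j m * b p :=
            Finset.sum_congr rfl fun m _ => Finset.sum_comm
        _ = ∑ p, ∑ m, ∑ j, K m j * J' p j m * b p := Finset.sum_comm
        _ = ∑ m, (∑ i, ∑ a, K i a * J' m a i) * b m := by
            refine Finset.sum_congr rfl fun p _ => ?_
            rw [Finset.sum_mul]
            refine Finset.sum_congr rfl fun i _ => ?_
            rw [Finset.sum_mul]
    rw [hT1, hT2, hT3]
    ring
  calc ∑ j, ∑ m, K m j *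
      ( -((A.det)^2)⁻¹ * (∑ i, ∑ a, A.adjugate i a * J' m a i) * (∑ p, A j p * b p)
        + (A.det)⁻¹ * ((∑ p, J' m j p * b p) + (∑ p, A j p * b' m p)) )
      = (A.det)⁻¹ * ∑ j, ∑ m, K m j *
          ( -(∑ i, ∑ a, K i a * J' m a i) * (∑ p, A j p * b p)
            + ((∑ p, J' m j p * b p) + (∑ p, A j p * b' m p)) ) := by
        rw [Finset.mul_sum]
        refine Finset.sum_congr rfl fun j _ => ?_
        rw [Finset.mul_sum]
        refine Finset.sum_congr rfl fun m _ => ?_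
        simp only [hadj, Matrix.smul_apply, smul_eq_mul]
        have e1 : ∑ i, ∑ a, A.det * K i a * J' m a i
            = A.det * ∑ i, ∑ a, K i a * J' m a i := by
          rw [Finset.mul_sum]
          refine Finset.sum_congr rfl fun i _ => ?_
          rw [Finset.mul_sum]
          refine Finset.sum_congr rfl fun a _ => ?_
          ring
        rw [e1]
        field_simp
    _ = 0 := by rw [key, mul_zero]

theorem vec_decomp {d : ℕ} (v : Fin d → ℝ) :
    ∑ k, v k • (Pi.single k 1 : Fin d → ℝ) = v := by
  funext m
  simp [Finset.sum_apply, Pi.single_apply]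

theorem fderiv_component {d : ℕ} {f : (Fin d → ℝ) → (Fin d → ℝ)} {y : Fin d → ℝ}
    (hf : DifferentiableAt ℝ f y) (a : Fin d) (v : Fin d → ℝ) :
    fderiv ℝ (fun w => f w a) y v = fderiv ℝ f y v a := by
  have h : HasFDerivAt (fun w => f w a)
      ((ContinuousLinearMap.proj (R := ℝ) (φ := fun _ : Fin d => ℝ) a).comp (fderiv ℝ f y)) y :=
    (ContinuousLinearMap.proj (R := ℝ) (φ := fun _ : Fin d => ℝ) a).hasFDerivAt.comp y
      hf.hasFDerivAt
  rw [h.fderiv]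
  rfl

theorem sumA_aux {d : ℕ} (Jr σv : Matrix (Fin d) (Fin d) ℝ) (Dv du : Fin d → ℝ)
    (hfact : ∀ q, ∑ k, Jr k q * Dv k = du q) (j : Fin d) :
    ∑ k, (∑ p, ∑ q, Jr j p * Jr k q * σv p q) * Dv k
      = ∑ p, Jr j p * ∑ q, σv p q * du q := by
  calc ∑ k, (∑ p, ∑ q, Jr j p * Jr k q * σv p q) * Dv k
      = ∑ k, ∑ p, ∑ q, Jr j p * σv p q * (Jr k q * Dv k) := by
        refine Finset.sum_congr rfl fun k _ => ?_
        rw [Finset.sum_mul]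
        refine Finset.sum_congr rfl fun p _ => ?_
        rw [Finset.sum_mul]
        refine Finset.sum_congr rfl fun q _ => ?_
        ring
    _ = ∑ p, ∑ k, ∑ q, Jr j p * σv p q * (Jr k q * Dv k) := Finset.sum_comm
    _ = ∑ p, ∑ q, ∑ k, Jr j p * σv p q * (Jr k q * Dv k) :=
        Finset.sum_congr rfl fun p _ => Finset.sum_comm
    _ = ∑ p, Jr j p * ∑ q, σv p q * du q := by
        refine Finset.sum_congr rfl fun p _ => ?_
        rw [Finset.mul_sum]
        refine Finset.sum_congr rfl fun q _ => ?_
        rw [← hfact q, Finset.mul_sum, Finset.mul_sum]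
        refine Finset.sum_congr rfl fun k _ => ?_
        ring

noncomputable def Jmat {d : ℕ} (F : (Fin d → ℝ) → (Fin d → ℝ)) (y : Fin d → ℝ) :
    Matrix (Fin d) (Fin d) ℝ :=
  Matrix.of fun a b => fderiv ℝ (fun w => F w a) y (Pi.single b 1)

noncomputable def bvec {d : ℕ} (σ : (Fin d → ℝ) → Matrix (Fin d) (Fin d) ℝ)
    (u : (Fin d → ℝ) → ℝ) (p : Fin d) (y : Fin d → ℝ) : ℝ :=
  ∑ q, σ y p q * fderiv ℝ u y (Pi.single q 1)

noncomputable def cvec {d : ℕ} (σ : (Fin d → ℝ) → Matrix (Fin d) (Fin d) ℝ)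
    (u : (Fin d → ℝ) → ℝ) (F : (Fin d → ℝ) → (Fin d → ℝ)) (j : Fin d) (y : Fin d → ℝ) : ℝ :=
  ((Jmat F y).det)⁻¹ * ∑ p, Jmat F y j p * bvec σ u p y



/-- Invariance of the divergence-form equation `∇·(σ∇u) = 0` under a
diffeomorphism `F : Ω → Ω` (with inverse `G`) restricting to the identity on `∂Ω`:
if `u` solves the equation with conductivity `σ`, then `v = u ∘ F⁻¹` solves it with the
push-forward conductivity `(F_*σ)^{jk}(x) = (det DF)⁻¹ Σ_{p,q} ∂_pF^j ∂_qF^k σ^{pq}`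
evaluated at `y = F⁻¹(x)`. -/
theorem stmt0 (d : ℕ) (Ω : Set (Fin d → ℝ)) (hΩ : IsOpen Ω) (hΩbd : Bornology.IsBounded Ω)
    (σ : (Fin d → ℝ) → Matrix (Fin d) (Fin d) ℝ)
    (hσsmooth : ∀ j k, ContDiffOn ℝ (⊤ : ℕ∞) (fun z => σ z j k) Ω)
    (hσsym : ∀ x ∈ Ω, (σ x).IsSymm)
    (hσpos : ∀ x ∈ Ω, ∀ v : Fin d → ℝ, v ≠ 0 → 0 < dotProduct v ((σ x).mulVec v))
    (F G : (Fin d → ℝ) → (Fin d → ℝ))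
    (hFsmooth : ContDiffOn ℝ (⊤ : ℕ∞) F Ω) (hGsmooth : ContDiffOn ℝ (⊤ : ℕ∞) G Ω)
    (hFmaps : Set.MapsTo F Ω Ω) (hGmaps : Set.MapsTo G Ω Ω)
    (hGF : ∀ x ∈ Ω, G (F x) = x) (hFG : ∀ x ∈ Ω, F (G x) = x)
    (hFbdry : ∀ x ∈ frontier Ω, F x = x)
    (u : (Fin d → ℝ) → ℝ) (husmooth : ContDiffOn ℝ (⊤ : ℕ∞) u Ω)
    (hu : ∀ x ∈ Ω,
      ∑ j, fderiv ℝ (fun z => ∑ k, σ z j k * fderiv ℝ u z (Pi.single k 1)) x (Pi.single j 1) = 0) :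
    ∀ x ∈ Ω,
      ∑ j, fderiv ℝ (fun z => ∑ k,
          ((Matrix.det (Matrix.of fun a b =>
              fderiv ℝ (fun w => F w a) (G z) (Pi.single b 1)))⁻¹ *
            ∑ p, ∑ q, fderiv ℝ (fun w => F w j) (G z) (Pi.single p 1) *
              fderiv ℝ (fun w => F w k) (G z) (Pi.single q 1) * σ (G z) p q) *
          fderiv ℝ (u ∘ G) z (Pi.single k 1)) x (Pi.single j 1) = 0 := by
  intro x hx
  classical
  have hmem : ∀ {w : Fin d → ℝ}, w ∈ Ω → Ω ∈ 𝓝 w := fun hw => hΩ.mem_nhds hw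
  have hFa : ∀ a, ContDiffOn ℝ (⊤ : ℕ∞) (fun w => F w a) Ω := fun a =>
    (ContinuousLinearMap.proj (R := ℝ) (φ := fun _ : Fin d => ℝ) a).contDiff.comp_contDiffOn
      hFsmooth
  have hGa : ∀ a, ContDiffOn ℝ (⊤ : ℕ∞) (fun w => G w a) Ω := fun a =>
    (ContinuousLinearMap.proj (R := ℝ) (φ := fun _ : Fin d => ℝ) a).contDiff.comp_contDiffOn
      hGsmooth
  have hFdiff : ∀ {w : Fin d → ℝ}, w ∈ Ω → DifferentiableAt ℝ F w := fun hw =>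
    (hFsmooth.contDiffAt (hmem hw)).differentiableAt (by simp)
  have hGdiff : ∀ {w : Fin d → ℝ}, w ∈ Ω → DifferentiableAt ℝ G w := fun hw =>
    (hGsmooth.contDiffAt (hmem hw)).differentiableAt (by simp)
  have hudiff : ∀ {w : Fin d → ℝ}, w ∈ Ω → DifferentiableAt ℝ u w := fun hw =>
    (husmooth.contDiffAt (hmem hw)).differentiableAt (by simp)
  have hDA : ∀ {f : (Fin d → ℝ) → ℝ}, ContDiffOn ℝ (⊤ : ℕ∞) f Ω →
      ∀ {w : Fin d → ℝ}, w ∈ Ω → DifferentiableAt ℝ f w := by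
    intro f hf w hw
    exact (hf.contDiffAt (hmem hw)).differentiableAt (by simp)
  -- chain rule identities
  have hGF_clm : ∀ {z : Fin d → ℝ}, z ∈ Ω →
      (fderiv ℝ G z).comp (fderiv ℝ F (G z)) = ContinuousLinearMap.id ℝ (Fin d → ℝ) := by
    intro z hz
    have hz' : G z ∈ Ω := hGmaps hz
    have hev : (G ∘ F) =ᶠ[𝓝 (G z)] id :=
      Filter.eventuallyEq_of_mem (hmem hz') (fun w hw => hGF w hw)
    have h1 : fderiv ℝ (G ∘ F) (G z)
        = fderiv ℝ (id : (Fin d → ℝ) → (Fin d → ℝ)) (G z) := hev.fderiv_eq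
    rw [fderiv_comp _ (hGdiff (hFmaps hz')) (hFdiff hz')] at h1
    rw [hFG z hz] at h1
    rw [h1, fderiv_id]
  have hJapp : ∀ {w : Fin d → ℝ}, w ∈ Ω → ∀ a b,
      Jmat F w a b = fderiv ℝ F w (Pi.single b 1) a := by
    intro w hw a b
    exact fderiv_component (hFdiff hw) a _
  have hKapp : ∀ {w : Fin d → ℝ}, w ∈ Ω → ∀ a b,
      Jmat G w a b = fderiv ℝ G w (Pi.single b 1) a := by
    intro w hw a b
    exact fderiv_component (hGdiff hw) a _
  have hFsum : ∀ {z : Fin d → ℝ}, z ∈ Ω → ∀ q : Fin d,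
      fderiv ℝ F (G z) (Pi.single q 1)
        = ∑ k, Jmat F (G z) k q • (Pi.single k 1 : Fin d → ℝ) := by
    intro z hz q
    conv_lhs => rw [← vec_decomp (fderiv ℝ F (G z) (Pi.single q 1))]
    exact Finset.sum_congr rfl fun k _ => by rw [hJapp (hGmaps hz) k q]
  have hGFid : ∀ {z : Fin d → ℝ}, z ∈ Ω → ∀ v : Fin d → ℝ,
      fderiv ℝ G z (fderiv ℝ F (G z) v) = v := by
    intro z hz v
    have h1 : fderiv ℝ G z (fderiv ℝ F (G z) v)
        = ((fderiv ℝ G z).comp (fderiv ℝ F (G z))) v := rfl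
    rw [h1, hGF_clm hz]
    rfl
  -- inverse matrix relation
  have hKA : ∀ {z : Fin d → ℝ}, z ∈ Ω → Jmat G z * Jmat F (G z) = 1 := by
    intro z hz
    ext m q
    rw [Matrix.mul_apply]
    have h2 : fderiv ℝ G z (fderiv ℝ F (G z) (Pi.single q 1))
        = ∑ k, Jmat F (G z) k q • fderiv ℝ G z (Pi.single k 1) := by
      rw [hFsum hz q, map_sum]
      exact Finset.sum_congr rfl fun k _ => (fderiv ℝ G z).map_smul _ _
    calc ∑ k, Jmat G z m k * Jmat F (G z) k q
        = ∑ k, Jmat F (G z) k q * fderiv ℝ G z (Pi.single k 1) m := by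
          refine Finset.sum_congr rfl fun k _ => ?_
          rw [hKapp hz m k]
          ring
      _ = (∑ k, Jmat F (G z) k q • fderiv ℝ G z (Pi.single k 1)) m := by
          rw [Finset.sum_apply]
          refine Finset.sum_congr rfl fun k _ => ?_
          rw [Pi.smul_apply, smul_eq_mul]
      _ = (Pi.single q 1 : Fin d → ℝ) m := by rw [← h2, hGFid hz]
      _ = (1 : Matrix (Fin d) (Fin d) ℝ) m q := by
          simp [Matrix.one_apply, Pi.single_apply]
  have hdet_ne : ∀ {w : Fin d → ℝ}, w ∈ Ω → (Jmat F w).det ≠ 0 := by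
    intro w hw
    have h1 := hKA (hFmaps hw)
    rw [hGF w hw] at h1
    exact (Matrix.isUnit_det_of_left_inverse h1).ne_zero
  -- smoothness of the various scalar functions on Ω
  have hJsm : ∀ a p, ContDiffOn ℝ (⊤ : ℕ∞) (fun w => Jmat F w a p) Ω := fun a p =>
    ((hFa a).fderiv_of_isOpen hΩ (by simp)).clm_apply contDiffOn_const
  have hdu : ∀ q, ContDiffOn ℝ (⊤ : ℕ∞) (fun w => fderiv ℝ u w (Pi.single q 1)) Ω := fun q =>
    (husmooth.fderiv_of_isOpen hΩ (by simp)).clm_apply contDiffOn_const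
  have hbsm : ∀ p, ContDiffOn ℝ (⊤ : ℕ∞) (bvec σ u p) Ω := fun p =>
    ContDiffOn.sum fun q _ => (hσsmooth p q).mul (hdu q)
  have hdetsm : ContDiffOn ℝ (⊤ : ℕ∞) (fun w => (Jmat F w).det) Ω := by
    have hrw : (fun w => (Jmat F w).det)
        = fun w => ∑ τ : Equiv.Perm (Fin d),
            ((Equiv.Perm.sign τ : ℤ) : ℝ) * ∏ i, Jmat F w (τ i) i :=
      funext fun w => Matrix.det_apply' _
    rw [hrw]
    refine ContDiffOn.sum fun τ _ => ContDiffOn.mul contDiffOn_const ?_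
    have : ∀ s : Finset (Fin d), ContDiffOn ℝ (⊤ : ℕ∞) (fun w => ∏ i ∈ s, Jmat F w (τ i) i) Ω := by
      intro s
      induction s using Finset.induction with
      | empty => simpa using contDiffOn_const
      | @insert i s hi ih =>
          have hrw2 : (fun w => ∏ i' ∈ insert i s, Jmat F w (τ i') i')
              = fun w => Jmat F w (τ i) i * ∏ i' ∈ s, Jmat F w (τ i') i' :=
            funext fun w => Finset.prod_insert hi
          rw [hrw2]
          exact (hJsm (τ i) i).mul ih
    exact this Finset.univ
  have hcsm : ∀ j, ContDiffOn ℝ (⊤ : ℕ∞) (cvec σ u F j) Ω := fun j =>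
    (hdetsm.inv fun w hw => hdet_ne hw).mul
      (ContDiffOn.sum fun p _ => (hJsm j p).mul (hbsm p))
  -- Step A : rewrite the integrand as (cvec j) ∘ G on Ω
  have hfact : ∀ {z : Fin d → ℝ}, z ∈ Ω → ∀ q,
      ∑ k, Jmat F (G z) k q * fderiv ℝ (u ∘ G) z (Pi.single k 1)
        = fderiv ℝ u (G z) (Pi.single q 1) := by
    intro z hz q
    have hGz : G z ∈ Ω := hGmaps hz
    have hcomp : fderiv ℝ (u ∘ G) z = (fderiv ℝ u (G z)).comp (fderiv ℝ G z) :=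
      fderiv_comp z (hudiff hGz) (hGdiff hz)
    calc ∑ k, Jmat F (G z) k q * fderiv ℝ (u ∘ G) z (Pi.single k 1)
        = ∑ k, Jmat F (G z) k q • fderiv ℝ u (G z) (fderiv ℝ G z (Pi.single k 1)) := by
          refine Finset.sum_congr rfl fun k _ => ?_
          rw [hcomp]
          rfl
      _ = fderiv ℝ u (G z) (∑ k, Jmat F (G z) k q • fderiv ℝ G z (Pi.single k 1)) := by
          rw [map_sum]
          exact Finset.sum_congr rfl fun k _ => ((fderiv ℝ u (G z)).map_smul _ _).symm
      _ = fderiv ℝ u (G z) (fderiv ℝ G z (fderiv ℝ F (G z) (Pi.single q 1))) := by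
          congr 1
          rw [hFsum hz q, map_sum]
          exact Finset.sum_congr rfl fun k _ => ((fderiv ℝ G z).map_smul _ _).symm
      _ = fderiv ℝ u (G z) (Pi.single q 1) := by rw [hGFid hz]
  have hAeq : ∀ j : Fin d, (fun z => ∑ k,
          ((Matrix.det (Matrix.of fun a b =>
              fderiv ℝ (fun w => F w a) (G z) (Pi.single b 1)))⁻¹ *
            ∑ p, ∑ q, fderiv ℝ (fun w => F w j) (G z) (Pi.single p 1) *
              fderiv ℝ (fun w => F w k) (G z) (Pi.single q 1) * σ (G z) p q) *
          fderiv ℝ (u ∘ G) z (Pi.single k 1))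
        =ᶠ[𝓝 x] (fun z => cvec σ u F j (G z)) := by
    intro j
    refine Filter.eventuallyEq_of_mem (hmem hx) (fun z hz => ?_)
    show ∑ k, (((Jmat F (G z)).det)⁻¹ *
          ∑ p, ∑ q, Jmat F (G z) j p * Jmat F (G z) k q * σ (G z) p q) *
        fderiv ℝ (u ∘ G) z (Pi.single k 1) = cvec σ u F j (G z)
    calc ∑ k, (((Jmat F (G z)).det)⁻¹ *
          ∑ p, ∑ q, Jmat F (G z) j p * Jmat F (G z) k q * σ (G z) p q) *
        fderiv ℝ (u ∘ G) z (Pi.single k 1)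
        = ((Jmat F (G z)).det)⁻¹ *
            ∑ k, (∑ p, ∑ q, Jmat F (G z) j p * Jmat F (G z) k q * σ (G z) p q) *
              fderiv ℝ (u ∘ G) z (Pi.single k 1) := by
          rw [Finset.mul_sum]
          refine Finset.sum_congr rfl fun k _ => ?_
          ring
      _ = ((Jmat F (G z)).det)⁻¹ *
            ∑ p, Jmat F (G z) j p * ∑ q, σ (G z) p q * fderiv ℝ u (G z) (Pi.single q 1) := by
          rw [sumA_aux (Jmat F (G z)) (σ (G z)) _ _ (hfact hz) j]
      _ = cvec σ u F j (G z) := rfl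
  -- point y = G x
  have hy : G x ∈ Ω := hGmaps hx
  -- Schwarz symmetry of second partials of F
  have hschwarz : ∀ m a p : Fin d,
      fderiv ℝ (fun w => Jmat F w a p) (G x) (Pi.single m 1)
        = fderiv ℝ (fun w => Jmat F w a m) (G x) (Pi.single p 1) := by
    intro m a p
    have hca : ContDiffAt ℝ (⊤ : ℕ∞) (fun w => F w a) (G x) := (hFa a).contDiffAt (hmem hy)
    have hsymm : IsSymmSndFDerivAt ℝ (fun w => F w a) (G x) := hca.isSymmSndFDerivAt (by rw [minSmoothness_of_isRCLikeNormedField]; exact WithTop.coe_le_coe.mpr le_top)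
    have hdf : DifferentiableAt ℝ (fderiv ℝ (fun w => F w a)) (G x) :=
      (((hFa a).fderiv_of_isOpen (m := (⊤ : ℕ∞)) hΩ (by simp)).contDiffAt (hmem hy)).differentiableAt (by simp)
    have key : ∀ v w : Fin d → ℝ,
        fderiv ℝ (fun y' => fderiv ℝ (fun w' => F w' a) y' v) (G x) w
          = fderiv ℝ (fderiv ℝ (fun w' => F w' a)) (G x) w v := by
      intro v w
      rw [fderiv_clm_apply hdf (differentiableAt_const v)]
      simp
    show fderiv ℝ (fun y' => fderiv ℝ (fun w' => F w' a) y' (Pi.single p 1)) (G x)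
          (Pi.single m 1)
        = fderiv ℝ (fun y' => fderiv ℝ (fun w' => F w' a) y' (Pi.single m 1)) (G x)
          (Pi.single p 1)
    rw [key, key]
    exact hsymm.eq _ _
  -- divergence-free hypothesis in bvec form
  have hdiv : ∑ m, fderiv ℝ (bvec σ u m) (G x) (Pi.single m 1) = 0 := hu (G x) hy
  -- Step C : chain rule for cvec ∘ G
  have hstepC : ∀ j, fderiv ℝ (fun z => cvec σ u F j (G z)) x (Pi.single j 1)
      = ∑ m, Jmat G x m j * fderiv ℝ (cvec σ u F j) (G x) (Pi.single m 1) := by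
    intro j
    have hcd : DifferentiableAt ℝ (cvec σ u F j) (G x) := hDA (hcsm j) hy
    have hcomp : fderiv ℝ (cvec σ u F j ∘ G) x
        = (fderiv ℝ (cvec σ u F j) (G x)).comp (fderiv ℝ G x) :=
      fderiv_comp x hcd (hGdiff hx)
    have hvx : fderiv ℝ G x (Pi.single j 1)
        = ∑ m, Jmat G x m j • (Pi.single m 1 : Fin d → ℝ) := by
      conv_lhs => rw [← vec_decomp (fderiv ℝ G x (Pi.single j 1))]
      exact Finset.sum_congr rfl fun m _ => by rw [hKapp hx m j]
    rw [show (fun z => cvec σ u F j (G z)) = cvec σ u F j ∘ G from rfl, hcomp]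
    show fderiv ℝ (cvec σ u F j) (G x) (fderiv ℝ G x (Pi.single j 1)) = _
    rw [hvx, map_sum]
    refine Finset.sum_congr rfl fun m _ => ?_
    rw [(fderiv ℝ (cvec σ u F j) (G x)).map_smul, smul_eq_mul]
  -- Step D : explicit formula for the derivative of cvec
  have hstepD : ∀ j m, fderiv ℝ (cvec σ u F j) (G x) (Pi.single m 1)
      = -(((Jmat F (G x)).det)^2)⁻¹ *
            (∑ i, ∑ a, (Jmat F (G x)).adjugate i a *
              fderiv ℝ (fun w => Jmat F w a i) (G x) (Pi.single m 1)) *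
            (∑ p, Jmat F (G x) j p * bvec σ u p (G x))
        + ((Jmat F (G x)).det)⁻¹ *
            ((∑ p, fderiv ℝ (fun w => Jmat F w j p) (G x) (Pi.single m 1) * bvec σ u p (G x))
              + (∑ p, Jmat F (G x) j p * fderiv ℝ (bvec σ u p) (G x) (Pi.single m 1))) := by
    intro j m
    have hdet_has : HasFDerivAt (fun w => (Jmat F w).det)
        (∑ i, ∑ a, (Jmat F (G x)).adjugate i a • fderiv ℝ (fun w => Jmat F w a i) (G x)) (G x) :=
      jacobi_aux (fun a b => (hDA (hJsm a b) hy).hasFDerivAt)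
    have hinv_has : HasFDerivAt (fun w => ((Jmat F w).det)⁻¹)
        ((-(ContinuousLinearMap.mulLeftRight ℝ ℝ (((Jmat F (G x)).det)⁻¹)
            (((Jmat F (G x)).det)⁻¹))).comp
          (∑ i, ∑ a, (Jmat F (G x)).adjugate i a •
            fderiv ℝ (fun w => Jmat F w a i) (G x))) (G x) :=
      (hasFDerivAt_inv' (hdet_ne hy)).comp (G x) hdet_has
    have hS_has : HasFDerivAt (fun w => ∑ p, Jmat F w j p * bvec σ u p w)
        (∑ p, (Jmat F (G x) j p • fderiv ℝ (bvec σ u p) (G x)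
          + bvec σ u p (G x) • fderiv ℝ (fun w => Jmat F w j p) (G x))) (G x) :=
      HasFDerivAt.fun_sum fun p _ =>
        ((hDA (hJsm j p) hy).hasFDerivAt.mul (hDA (hbsm p) hy).hasFDerivAt)
    have hc_has : HasFDerivAt (cvec σ u F j)
        ((((Jmat F (G x)).det)⁻¹) • (∑ p, (Jmat F (G x) j p • fderiv ℝ (bvec σ u p) (G x)
            + bvec σ u p (G x) • fderiv ℝ (fun w => Jmat F w j p) (G x)))
          + (∑ p, Jmat F (G x) j p * bvec σ u p (G x)) •
            ((-(ContinuousLinearMap.mulLeftRight ℝ ℝ (((Jmat F (G x)).det)⁻¹)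
                (((Jmat F (G x)).det)⁻¹))).comp
              (∑ i, ∑ a, (Jmat F (G x)).adjugate i a •
                fderiv ℝ (fun w => Jmat F w a i) (G x)))) (G x) :=
      hinv_has.mul hS_has
    rw [hc_has.fderiv]
    simp only [ContinuousLinearMap.add_apply, ContinuousLinearMap.smul_apply,
      ContinuousLinearMap.comp_apply, ContinuousLinearMap.neg_apply,
      ContinuousLinearMap.mulLeftRight_apply, ContinuousLinearMap.sum_apply, smul_eq_mul,
      Finset.sum_add_distrib]
    have hcommute : ∑ p, bvec σ u p (G x) *
          fderiv ℝ (fun w => Jmat F w j p) (G x) (Pi.single m 1)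
        = ∑ p, fderiv ℝ (fun w => Jmat F w j p) (G x) (Pi.single m 1) * bvec σ u p (G x) :=
      Finset.sum_congr rfl fun p _ => mul_comm _ _
    rw [hcommute]
    have hne := hdet_ne hy
    field_simp
    ring
  -- assemble everything
  calc ∑ j, fderiv ℝ (fun z => ∑ k,
          ((Matrix.det (Matrix.of fun a b =>
              fderiv ℝ (fun w => F w a) (G z) (Pi.single b 1)))⁻¹ *
            ∑ p, ∑ q, fderiv ℝ (fun w => F w j) (G z) (Pi.single p 1) *
              fderiv ℝ (fun w => F w k) (G z) (Pi.single q 1) * σ (G z) p q) *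
          fderiv ℝ (u ∘ G) z (Pi.single k 1)) x (Pi.single j 1)
      = ∑ j, fderiv ℝ (fun z => cvec σ u F j (G z)) x (Pi.single j 1) :=
        Finset.sum_congr rfl fun j _ => by rw [(hAeq j).fderiv_eq]
    _ = ∑ j, ∑ m, Jmat G x m j *
          ( -(((Jmat F (G x)).det)^2)⁻¹ *
              (∑ i, ∑ a, (Jmat F (G x)).adjugate i a *
                fderiv ℝ (fun w => Jmat F w a i) (G x) (Pi.single m 1)) *
              (∑ p, Jmat F (G x) j p * bvec σ u p (G x))
            + ((Jmat F (G x)).det)⁻¹ *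
              ((∑ p, fderiv ℝ (fun w => Jmat F w j p) (G x) (Pi.single m 1) * bvec σ u p (G x))
                + (∑ p, Jmat F (G x) j p * fderiv ℝ (bvec σ u p) (G x) (Pi.single m 1))) ) := by
        refine Finset.sum_congr rfl fun j _ => ?_
        rw [hstepC j]
        exact Finset.sum_congr rfl fun m _ => by rw [hstepD j m]
    _ = 0 := alg_aux (Jmat F (G x)) (Jmat G x) (hKA hx) (hdet_ne hy)
          (fun m a p => fderiv ℝ (fun w => Jmat F w a p) (G x) (Pi.single m 1)) hschwarz
          (fun p => bvec σ u p (G x))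
          (fun m p => fderiv ℝ (bvec σ u p) (G x) (Pi.single m 1)) hdiv
end

section
/- For the map F(y) = (1 + |y|/2)·y/|y| on 0 < |y| ≤ 2 in ℝ², the push-forward of the identity conductivity σ₀ = I is σ(x) = ((|x|−1)/|x|)·Π(x) + (|x|/(|x|−1))·(I − Π(x)) for 1 < |x| < 2, where Π(x) is the orthogonal projection onto the radial direction x/|x|. -/
open scoped RealInnerProductSpace

/-- The two-dimensional cloaking blow-up map `F(y) = (1 + |y|/2) y/|y|` (for `0 < |y| ≤ 2`),
extended by the identity outside. -/
noncomputable def cloakF (y : EuclideanSpace ℝ (Fin 2)) : EuclideanSpace ℝ (Fin 2) :=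
  if 2 < ‖y‖ then y else (1 + ‖y‖ / 2) • (‖y‖⁻¹ • y)

/-- The projection `Π(x)` onto the radial direction `x/|x|`, as a matrix. -/
noncomputable def radialProj (x : EuclideanSpace ℝ (Fin 2)) : Matrix (Fin 2) (Fin 2) ℝ :=
  Matrix.of fun i j => x i * x j / ‖x‖ ^ 2

/-!
On `0 < |y| < 2` the map is `F(y) = (|y|⁻¹ + 1/2) y`, so its Jacobian is
`DF(y) = ½ Π + (|y|⁻¹ + ½) (I − Π)` with `Π = Π(y)`. At `y = F⁻¹(x)` we have `|y| = 2(|x| − 1)`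
and `Π(y) = Π(x)`, so `DF` stretches radially by `a = ½` and tangentially by
`b = |x| / (2(|x| − 1))`. As `Π` is a symmetric idempotent of rank one in the plane,
`DF DFᵀ = a² Π + b² (I − Π)` and `det DF = a b`, whence `(det DF)⁻¹ DF DFᵀ = (a/b) Π + (b/a) (I − Π)`.
-/

open Topology
open scoped Matrix

section Calculus

variable {F : Type*} [NormedAddCommGroup F] [InnerProductSpace ℝ F]

theorem hasFDerivAt_norm_of_ne_zero {y : F} (hy : y ≠ 0) :
    HasFDerivAt (‖·‖) (‖y‖⁻¹ • innerSL ℝ y) y := by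
  have h := (hasStrictFDerivAt_norm_sq y).hasFDerivAt.sqrt (by positivity)
  simp only [Real.sqrt_sq (norm_nonneg _)] at h
  convert h using 1
  ext v
  simp only [smul_apply, coe_innerSL_apply, smul_eq_mul, nsmul_eq_mul, Nat.cast_ofNat]
  field_simp

theorem hasFDerivAt_inv_norm_add_smul {y : F} (hy : y ≠ 0) (c : ℝ) :
    HasFDerivAt (fun z : F => (‖z‖⁻¹ + c) • z)
      ((‖y‖⁻¹ + c) • ContinuousLinearMap.id ℝ F - (‖y‖ ^ 3)⁻¹ • (innerSL ℝ y).smulRight y) y := by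
  have hinv : HasFDerivAt (fun z : F => ‖z‖⁻¹ + c) (-(‖y‖ ^ 2)⁻¹ • ‖y‖⁻¹ • innerSL ℝ y) y :=
    ((hasDerivAt_inv (norm_ne_zero_iff.mpr hy)).comp_hasFDerivAt y
      (hasFDerivAt_norm_of_ne_zero hy)).add_const c
  refine (hinv.smul (hasFDerivAt_id y)).congr_fderiv ?_
  ext v
  simp only [add_apply, sub_apply, smul_apply, ContinuousLinearMap.id_apply,
    ContinuousLinearMap.smulRight_apply, coe_innerSL_apply, id_eq, smul_smul]
  module

end Calculus

section Projection

variable {R n : Type*} [CommRing R] [Fintype n] [DecidableEq n] {P : Matrix n n R}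

theorem Matrix.mul_transpose_of_isSymm_of_isIdempotentElem (hPs : P.IsSymm)
    (hPi : IsIdempotentElem P) (a b : R) :
    (a • P + b • (1 - P)) * (a • P + b • (1 - P))ᵀ = a ^ 2 • P + b ^ 2 • (1 - P) := by
  rw [Matrix.transpose_add, Matrix.transpose_smul, Matrix.transpose_smul, Matrix.transpose_sub,
    Matrix.transpose_one, hPs.eq]
  simp only [add_mul, mul_add, sub_mul, mul_sub, Matrix.smul_mul, Matrix.mul_smul, one_mul, mul_one,
    hPi.eq]
  module

end Projection

section RadialProjection

variable {x : EuclideanSpace ℝ (Fin 2)}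

theorem radialProj_isSymm (x : EuclideanSpace ℝ (Fin 2)) : (radialProj x).IsSymm := by
  ext i j
  simp [radialProj, mul_comm]

theorem sq_add_sq_eq_norm_sq (x : EuclideanSpace ℝ (Fin 2)) : x 0 ^ 2 + x 1 ^ 2 = ‖x‖ ^ 2 := by
  simp [EuclideanSpace.real_norm_sq_eq, Fin.sum_univ_two]

theorem radialProj_isIdempotentElem (hx : x ≠ 0) : IsIdempotentElem (radialProj x) := by
  have : x 0 ^ 2 + x 1 ^ 2 ≠ 0 := by rw [sq_add_sq_eq_norm_sq]; positivity
  ext i j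
  simp only [radialProj, Matrix.mul_apply, Matrix.of_apply, Fin.sum_univ_two,
    ← sq_add_sq_eq_norm_sq]
  field_simp

theorem radialProj_smul {c : ℝ} (hc : c ≠ 0) (x : EuclideanSpace ℝ (Fin 2)) :
    radialProj (c • x) = radialProj x := by
  ext i j
  simp only [radialProj, Matrix.of_apply, PiLp.smul_apply, smul_eq_mul, norm_smul, Real.norm_eq_abs,
    mul_pow, sq_abs]
  field_simp

theorem det_smul_radialProj_add_smul_one_sub (hx : x ≠ 0) (a b : ℝ) :
    (a • radialProj x + b • (1 - radialProj x)).det = a * b := by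
  have : x 0 ^ 2 + x 1 ^ 2 ≠ 0 := by rw [sq_add_sq_eq_norm_sq]; positivity
  rw [Matrix.det_fin_two]
  simp only [Matrix.add_apply, Matrix.smul_apply, Matrix.sub_apply, Matrix.one_apply_eq,
    Matrix.one_apply_ne zero_ne_one, Matrix.one_apply_ne one_ne_zero, radialProj, Matrix.of_apply,
    smul_eq_mul, ← sq_add_sq_eq_norm_sq]
  field_simp
  ring

theorem inv_det_smul_mul_transpose_radialProj (hx : x ≠ 0) {a b : ℝ} (ha : a ≠ 0) (hb : b ≠ 0) :
    let M := a • radialProj x + b • (1 - radialProj x)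
    M.det⁻¹ • (M * Mᵀ) = (a / b) • radialProj x + (b / a) • (1 - radialProj x) := by
  intro M
  rw [Matrix.mul_transpose_of_isSymm_of_isIdempotentElem (radialProj_isSymm x)
    (radialProj_isIdempotentElem hx), det_smul_radialProj_add_smul_one_sub hx, smul_add, smul_smul,
    smul_smul]
  congr 2 <;> field_simp

end RadialProjection

section Cloak

variable {y : EuclideanSpace ℝ (Fin 2)}

theorem cloakF_eventuallyEq (hy0 : y ≠ 0) (hy2 : ‖y‖ < 2) :
    cloakF =ᶠ[𝓝 y] fun z => (‖z‖⁻¹ + 1 / 2) • z := by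
  have hU : IsOpen {z : EuclideanSpace ℝ (Fin 2) | ‖z‖ < 2 ∧ z ≠ 0} :=
    (isOpen_lt continuous_norm continuous_const).inter isOpen_ne
  filter_upwards [hU.mem_nhds ⟨hy2, hy0⟩] with z ⟨hz2, hz0⟩
  have : ‖z‖ ≠ 0 := norm_ne_zero_iff.mpr hz0
  rw [cloakF, if_neg hz2.not_gt, smul_smul]
  congr 1
  field_simp

theorem cloakF_jacobian (hy0 : y ≠ 0) (hy2 : ‖y‖ < 2) :
    (Matrix.of fun p q => fderiv ℝ (fun z => cloakF z p) y (EuclideanSpace.single q 1)) =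
      (1 / 2 : ℝ) • radialProj y + (‖y‖⁻¹ + 1 / 2) • (1 - radialProj y) := by
  have hF := (hasFDerivAt_inv_norm_add_smul hy0 (1 / 2)).congr_of_eventuallyEq
    (cloakF_eventuallyEq hy0 hy2)
  have : ‖y‖ ≠ 0 := norm_ne_zero_iff.mpr hy0
  ext p q
  have hFp := (EuclideanSpace.proj (𝕜 := ℝ) p).hasFDerivAt.comp y hF
  rw [Matrix.of_apply, show (fun z => cloakF z p) = EuclideanSpace.proj p ∘ cloakF from rfl,
    hFp.fderiv]
  simp only [ContinuousLinearMap.comp_apply, sub_apply, smul_apply, ContinuousLinearMap.id_apply,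
    ContinuousLinearMap.smulRight_apply, coe_innerSL_apply, EuclideanSpace.inner_single_right,
    PiLp.proj_apply, PiLp.sub_apply, PiLp.smul_apply, PiLp.single_apply, radialProj,
    Matrix.add_apply, Matrix.smul_apply, Matrix.sub_apply, Matrix.one_apply, Matrix.of_apply,
    smul_eq_mul, conj_trivial]
  split_ifs <;> field_simp <;> ring

end Cloak

/-- for the map `F(y) = (1 + |y|/2) y/|y|`, the push-forward
`(F_*σ₀)^{jk}(x) = (det DF)⁻¹ Σ_p ∂_pF^j ∂_pF^k` at `y = F⁻¹(x) = 2(|x|-1)x/|x|` of the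
identity conductivity `σ₀ = I` equals
`σ(x) = ((|x|-1)/|x|) Π(x) + (|x|/(|x|-1)) (I - Π(x))` for `1 < |x| < 2`. -/
theorem stmt1 (x : EuclideanSpace ℝ (Fin 2)) (hx1 : 1 < ‖x‖) (hx2 : ‖x‖ < 2) :
    (Matrix.of fun j k =>
        (Matrix.det (Matrix.of fun p q =>
            fderiv ℝ (fun z => cloakF z p) ((2 * (‖x‖ - 1) / ‖x‖) • x)
              (EuclideanSpace.single q 1)))⁻¹ *
          ∑ p, fderiv ℝ (fun z => cloakF z j) ((2 * (‖x‖ - 1) / ‖x‖) • x)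
              (EuclideanSpace.single p 1) *
            fderiv ℝ (fun z => cloakF z k) ((2 * (‖x‖ - 1) / ‖x‖) • x)
              (EuclideanSpace.single p 1)) =
      ((‖x‖ - 1) / ‖x‖) • radialProj x + (‖x‖ / (‖x‖ - 1)) • (1 - radialProj x) := by
  have hx0 : x ≠ 0 := norm_pos_iff.mp (by linarith)
  have hs1 : ‖x‖ - 1 ≠ 0 := by linarith
  have hc : 2 * (‖x‖ - 1) / ‖x‖ ≠ 0 := by positivity
  set y := (2 * (‖x‖ - 1) / ‖x‖) • x
  have hy : ‖y‖ = 2 * (‖x‖ - 1) := by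
    rw [norm_smul, Real.norm_of_nonneg (by positivity)]
    field_simp
  have hy0 : y ≠ 0 := norm_pos_iff.mp (by rw [hy]; linarith)
  have hcoef : (2 * (‖x‖ - 1))⁻¹ + 1 / 2 = ‖x‖ / (2 * (‖x‖ - 1)) := by field_simp; ring
  have hJ := cloakF_jacobian hy0 (by linarith)
  rw [radialProj_smul hc, hy, hcoef] at hJ
  set J := Matrix.of fun p q => fderiv ℝ (fun z => cloakF z p) y (EuclideanSpace.single q 1)
  calc _ = J.det⁻¹ • (J * Jᵀ) := by
        ext j k
        simp [J, Matrix.mul_apply]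
    _ = _ := by
        rw [hJ, inv_det_smul_mul_transpose_radialProj hx0 (by norm_num) (by positivity)]
        congr 2 <;> field_simp
end
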